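/- For the mean-squared CCA similarity ρ_CCA(φ,ψ) = tr(Σ_φ⁻¹Σ_{φψ}Σ_ψ⁻¹Σ_{ψφ})/k between two centered representation maps φ, ψ: R^d → R^k with invertible covariances, the identity ρ_CCA(φ,ψ) = 1 − (1/2k) E[(φ(X)ᵀΣ_φ⁻¹φ(X′) − ψ(X)ᵀΣ_ψ⁻¹ψ(X′))²] holds, where X′ is an independent copy of X. -/

import Mathlib

/-!
Write `a(x, x') = φ(x)ᵀ Σ_φ⁻¹ φ(x')` and `b(x, x') = ψ(x)ᵀ Σ_ψ⁻¹ ψ(x')`. A product of two such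
bilinear forms is a single bilinear form, with matrix `Σ_ψ⁻¹ ⊗ Σ_φ⁻¹`, in the vectorized outer
products `vec(φ(x) ψ(x)ᵀ)` and `vec(φ(x') ψ(x')ᵀ)`. Since `X` and `X'` are independent, its
expectation is that form evaluated at `vec Σ_{φψ}` twice, i.e. `tr(Σ_{ψφ} Σ_φ⁻¹ Σ_{φψ} Σ_ψ⁻¹)`.
Hence `E[a b]` is `k` times the CCA similarity, `E[a²] = E[b²] = tr(I_k) = k`, and
expanding `E[(a - b)²]` gives the identity.
-/

open MeasureTheory Matrix
open scoped Kronecker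

namespace Matrix

variable {R m m' n n' : Type*} [Fintype m] [Fintype m'] [Fintype n] [Fintype n']

theorem trace_transpose_mul_nonsing_inv_mul_mul_transpose_nonsing_inv [CommRing R]
    [DecidableEq m] {S : Matrix m m R} (hS : IsUnit S.det) :
    trace (Sᵀ * S⁻¹ * S * S⁻¹ᵀ) = Fintype.card m := by
  rw [Matrix.mul_assoc Sᵀ, nonsing_inv_mul S hS, Matrix.mul_one, ← transpose_mul,
    nonsing_inv_mul S hS, transpose_one, trace_one]

theorem dotProduct_mulVec_mul_dotProduct_mulVec [CommSemiring R] (x : m → R)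
    (M : Matrix m m' R) (x' : m' → R) (y : n → R) (N : Matrix n n' R) (y' : n' → R) :
    (x ⬝ᵥ M *ᵥ x') * (y ⬝ᵥ N *ᵥ y')
      = vec (vecMulVec x y) ⬝ᵥ (N ⊗ₖ M) *ᵥ vec (vecMulVec x' y') := by
  simp only [dotProduct, mulVec, Fintype.sum_prod_type, vec, vecMulVec_apply, kroneckerMap_apply,
    Finset.sum_mul, Finset.mul_sum]
  refine Finset.sum_congr rfl fun j _ => ?_
  rw [Finset.sum_comm]
  exact Finset.sum_congr rfl fun i _ => Finset.sum_congr rfl fun j' _ =>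
    Finset.sum_congr rfl fun i' _ => by ring

end Matrix

section

variable {Ω Ω' ι κ : Type*} [MeasurableSpace Ω] [MeasurableSpace Ω'] {μ : Measure Ω}
  {ν : Measure Ω'} [Fintype ι] [Fintype κ]

theorem integrable_dotProduct_mulVec_prod {w : Ω → ι → ℝ} {w' : Ω' → κ → ℝ}
    (hw : ∀ i, Integrable (fun ω => w ω i) μ) (hw' : ∀ j, Integrable (fun ω => w' ω j) ν)
    (A : Matrix ι κ ℝ) :
    Integrable (fun p : Ω × Ω' => w p.1 ⬝ᵥ A *ᵥ w' p.2) (μ.prod ν) := by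
  simp only [dotProduct, mulVec, Finset.mul_sum]
  exact integrable_finsetSum _ fun i _ => integrable_finsetSum _ fun j _ =>
    (hw i).mul_prod ((hw' j).const_mul (A i j))

theorem integral_dotProduct_mulVec_prod [SFinite μ] [SFinite ν] {w : Ω → ι → ℝ}
    {w' : Ω' → κ → ℝ} (hw : ∀ i, Integrable (fun ω => w ω i) μ)
    (hw' : ∀ j, Integrable (fun ω => w' ω j) ν)
    (A : Matrix ι κ ℝ) :
    ∫ p : Ω × Ω', w p.1 ⬝ᵥ A *ᵥ w' p.2 ∂(μ.prod ν)
      = (fun i => ∫ ω, w ω i ∂μ) ⬝ᵥ A *ᵥ fun j => ∫ ω, w' ω j ∂ν := by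
  simp only [dotProduct, mulVec, Finset.mul_sum]
  rw [integral_finsetSum _ fun i _ => integrable_finsetSum _ fun j _ =>
    (hw i).mul_prod ((hw' j).const_mul (A i j))]
  refine Finset.sum_congr rfl fun i _ => ?_
  rw [integral_finsetSum _ fun j _ => (hw i).mul_prod ((hw' j).const_mul (A i j))]
  refine Finset.sum_congr rfl fun j _ => ?_
  rw [integral_prod_mul (fun ω => w ω i) (fun ω => A i j * w' ω j), integral_const_mul]

end

section

variable {α : Type*} [MeasurableSpace α] {μ : Measure α}

theorem integral_sub_sq {a b : α → ℝ} (haa : Integrable (fun x => a x * a x) μ)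
    (hab : Integrable (fun x => a x * b x) μ) (hbb : Integrable (fun x => b x * b x) μ) :
    ∫ x, (a x - b x) ^ 2 ∂μ = ∫ x, a x * a x ∂μ - 2 * ∫ x, a x * b x ∂μ + ∫ x, b x * b x ∂μ := by
  have hsq : (fun x => (a x - b x) ^ 2) = fun x => a x * a x - 2 * (a x * b x) + b x * b x := by
    ext x; ring
  have hab2 : Integrable (fun x => 2 * (a x * b x)) μ := hab.const_mul 2
  rw [hsq, integral_add (f := fun x => a x * a x - 2 * (a x * b x)) (haa.sub hab2) hbb,
    integral_sub haa hab2, integral_const_mul]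

end

section

variable {Ω : Type*} [MeasurableSpace Ω] {μ : Measure Ω} {m n : Type*}

noncomputable def crossMoment (μ : Measure Ω) (u : Ω → m → ℝ) (v : Ω → n → ℝ) : Matrix m n ℝ :=
  of fun i j => ∫ ω, u ω i * v ω j ∂μ

theorem isSymm_crossMoment_self (u : Ω → m → ℝ) : (crossMoment μ u u).IsSymm := by
  ext i j
  simp only [crossMoment, transpose_apply, of_apply, mul_comm]

variable {u : Ω → m → ℝ} {v : Ω → n → ℝ}

theorem integrable_vec_vecMulVec (hu : ∀ i, MemLp (fun ω => u ω i) 2 μ)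
    (hv : ∀ j, MemLp (fun ω => v ω j) 2 μ) (q : n × m) :
    Integrable (fun ω => vec (vecMulVec (u ω) (v ω)) q) μ :=
  (hu q.2).integrable_mul (hv q.1)

variable [Fintype m] [Fintype n]

theorem integrable_dotProduct_mulVec_mul_dotProduct_mulVec_prod
    (hu : ∀ i, MemLp (fun ω => u ω i) 2 μ) (hv : ∀ j, MemLp (fun ω => v ω j) 2 μ)
    (M : Matrix m m ℝ) (N : Matrix n n ℝ) :
    Integrable (fun p : Ω × Ω => (u p.1 ⬝ᵥ M *ᵥ u p.2) * (v p.1 ⬝ᵥ N *ᵥ v p.2)) (μ.prod μ) := by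
  simp only [dotProduct_mulVec_mul_dotProduct_mulVec]
  exact integrable_dotProduct_mulVec_prod (integrable_vec_vecMulVec hu hv)
    (integrable_vec_vecMulVec hu hv) _

theorem integral_dotProduct_mulVec_mul_dotProduct_mulVec_prod [SFinite μ]
    (hu : ∀ i, MemLp (fun ω => u ω i) 2 μ) (hv : ∀ j, MemLp (fun ω => v ω j) 2 μ)
    (M : Matrix m m ℝ) (N : Matrix n n ℝ) :
    ∫ p : Ω × Ω, (u p.1 ⬝ᵥ M *ᵥ u p.2) * (v p.1 ⬝ᵥ N *ᵥ v p.2) ∂(μ.prod μ)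
      = trace ((crossMoment μ u v)ᵀ * M * crossMoment μ u v * Nᵀ) := by
  simp only [dotProduct_mulVec_mul_dotProduct_mulVec]
  rw [integral_dotProduct_mulVec_prod (integrable_vec_vecMulVec hu hv)
    (integrable_vec_vecMulVec hu hv)]
  change vec (crossMoment μ u v) ⬝ᵥ (N ⊗ₖ M) *ᵥ vec (crossMoment μ u v) = _
  rw [kronecker_mulVec_vec, vec_dotProduct_vec]
  simp only [Matrix.mul_assoc]

end

theorem stmt12_general {Ω : Type*} [MeasurableSpace Ω] (μ : Measure Ω) [IsProbabilityMeasure μ]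
    {d k : ℕ} (hk : 0 < k) (X : Ω → (Fin d → ℝ))
    (φ ψ : (Fin d → ℝ) → (Fin k → ℝ))
    (hL2φ : ∀ i, MemLp (fun ω => φ (X ω) i) 2 μ)
    (hL2ψ : ∀ i, MemLp (fun ω => ψ (X ω) i) 2 μ)
    (Sφ Sψ Sφψ : Matrix (Fin k) (Fin k) ℝ)
    (hSφ : Sφ = Matrix.of fun i j => ∫ ω, φ (X ω) i * φ (X ω) j ∂μ)
    (hSψ : Sψ = Matrix.of fun i j => ∫ ω, ψ (X ω) i * ψ (X ω) j ∂μ)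
    (hSφψ : Sφψ = Matrix.of fun i j => ∫ ω, φ (X ω) i * ψ (X ω) j ∂μ)
    (hinvφ : IsUnit Sφ.det) (hinvψ : IsUnit Sψ.det) :
    Matrix.trace (Sφ⁻¹ * Sφψ * Sψ⁻¹ * Sφψᵀ) / (k : ℝ)
      = 1 - (1 / (2 * (k : ℝ))) *
          ∫ p : Ω × Ω,
            (φ (X p.1) ⬝ᵥ (Sφ⁻¹ *ᵥ φ (X p.2)) - ψ (X p.1) ⬝ᵥ (Sψ⁻¹ *ᵥ ψ (X p.2))) ^ 2
            ∂(μ.prod μ) := by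
  have hSφ : Sφ = crossMoment μ (fun ω => φ (X ω)) (fun ω => φ (X ω)) := hSφ
  have hSψ : Sψ = crossMoment μ (fun ω => ψ (X ω)) (fun ω => ψ (X ω)) := hSψ
  have hSφψ : Sφψ = crossMoment μ (fun ω => φ (X ω)) (fun ω => ψ (X ω)) := hSφψ
  have hSψinv : Sψ⁻¹ᵀ = Sψ⁻¹ := (hSψ ▸ isSymm_crossMoment_self _).inv
  rw [integral_sub_sq (integrable_dotProduct_mulVec_mul_dotProduct_mulVec_prod hL2φ hL2φ _ _)
      (integrable_dotProduct_mulVec_mul_dotProduct_mulVec_prod hL2φ hL2ψ _ _)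
      (integrable_dotProduct_mulVec_mul_dotProduct_mulVec_prod hL2ψ hL2ψ _ _),
    integral_dotProduct_mulVec_mul_dotProduct_mulVec_prod hL2φ hL2φ,
    integral_dotProduct_mulVec_mul_dotProduct_mulVec_prod hL2φ hL2ψ,
    integral_dotProduct_mulVec_mul_dotProduct_mulVec_prod hL2ψ hL2ψ, ← hSφ, ← hSψ, ← hSφψ,
    trace_transpose_mul_nonsing_inv_mul_mul_transpose_nonsing_inv hinvφ,
    trace_transpose_mul_nonsing_inv_mul_mul_transpose_nonsing_inv hinvψ, hSψinv,
    trace_mul_comm _ Sφψᵀ]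
  simp only [Matrix.mul_assoc, Fintype.card_fin]
  field_simp
  ring

/-- The mean-squared CCA similarity `tr(Σ_φ⁻¹Σ_{φψ}Σ_ψ⁻¹Σ_{ψφ})/k` equals
`1 − (1/2k) E[(φ(X)ᵀΣ_φ⁻¹φ(X′) − ψ(X)ᵀΣ_ψ⁻¹ψ(X′))²]`. -/
theorem stmt12 {Ω : Type*} [MeasurableSpace Ω] (μ : Measure Ω) [IsProbabilityMeasure μ]
    {d k : ℕ} (hk : 0 < k) (X : Ω → (Fin d → ℝ))
    (φ ψ : (Fin d → ℝ) → (Fin k → ℝ))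
    (hmeasφ : Measurable fun ω => φ (X ω)) (hmeasψ : Measurable fun ω => ψ (X ω))
    (hL2φ : ∀ i, MemLp (fun ω => φ (X ω) i) 2 μ)
    (hL2ψ : ∀ i, MemLp (fun ω => ψ (X ω) i) 2 μ)
    (hcentφ : ∀ i, ∫ ω, φ (X ω) i ∂μ = 0) (hcentψ : ∀ i, ∫ ω, ψ (X ω) i ∂μ = 0)
    (Sφ Sψ Sφψ : Matrix (Fin k) (Fin k) ℝ)
    (hSφ : Sφ = Matrix.of fun i j => ∫ ω, φ (X ω) i * φ (X ω) j ∂μ)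
    (hSψ : Sψ = Matrix.of fun i j => ∫ ω, ψ (X ω) i * ψ (X ω) j ∂μ)
    (hSφψ : Sφψ = Matrix.of fun i j => ∫ ω, φ (X ω) i * ψ (X ω) j ∂μ)
    (hinvφ : IsUnit Sφ.det) (hinvψ : IsUnit Sψ.det) :
    Matrix.trace (Sφ⁻¹ * Sφψ * Sψ⁻¹ * Sφψᵀ) / (k : ℝ)
      = 1 - (1 / (2 * (k : ℝ))) *
          ∫ p : Ω × Ω,
            (φ (X p.1) ⬝ᵥ (Sφ⁻¹ *ᵥ φ (X p.2)) - ψ (X p.1) ⬝ᵥ (Sψ⁻¹ *ᵥ ψ (X p.2))) ^ 2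
            ∂(μ.prod μ) :=
  stmt12_general μ hk X φ ψ hL2φ hL2ψ Sφ Sψ Sφψ hSφ hSψ hSφψ hinvφ hinvψ
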